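/- Let a, b be points of the open unit ball 𝔹ⁿ ⊂ ℝⁿ. Define the hyperbolic distance ρ(a,b) := 2·arsinh(‖a−b‖/√((1−‖a‖²)(1−‖b‖²))) and the Hilbert distance h(a,b) := 2·arcosh((1 − ⟨a,b⟩)/√((1−‖a‖²)(1−‖b‖²))). Then tanh(ρ(a,b)/4) ≥ tanh(h(a,b)/4) ≥ ‖a−b‖/√(4 − ‖a+b‖²), with equality throughout when a = −b. -/

import Mathlib

/-! Write `c = cosh (h/2)` and `s = sinh (ρ/2)` as given by the defining formulas. Expanding
`‖a - b‖²` gives `c² = 1 + s² + (⟨a,b⟩² - ‖a‖²‖b‖²) / ((1 - ‖a‖²)(1 - ‖b‖²))`, so Cauchy–Schwarz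
yields `c ≤ cosh (ρ/2)`, i.e. `h ≤ ρ`, with equality when `a = -b`. By the half-angle formula
`tanh (h/4) = √((c - 1)/(c + 1))`, and after clearing denominators the lower bound becomes the
AM–GM inequality `2 √((1 - ‖a‖²)(1 - ‖b‖²)) ≤ (1 - ‖a‖²) + (1 - ‖b‖²)`. -/

/-- The inverse hyperbolic cosine on the reals. -/
noncomputable def arcosh (x : ℝ) : ℝ := Real.log (x + Real.sqrt (x^2 - 1))

/-- The Hilbert distance of the unit ball `𝔹ⁿ`. -/
noncomputable def hilbertDist {n : ℕ} (a b : EuclideanSpace ℝ (Fin n)) : ℝ :=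
  2 * arcosh ((1 - (inner ℝ a b : ℝ)) / Real.sqrt ((1 - ‖a‖^2) * (1 - ‖b‖^2)))

/-- The hyperbolic distance of the unit ball `𝔹ⁿ`. -/
noncomputable def hypDist {n : ℕ} (a b : EuclideanSpace ℝ (Fin n)) : ℝ :=
  2 * Real.arsinh (‖a - b‖ / Real.sqrt ((1 - ‖a‖^2) * (1 - ‖b‖^2)))

open Real RealInnerProductSpace

lemma tanh_monotone : Monotone tanh := by
  intro x y hxy
  rw [tanh_eq_sinh_div_cosh, tanh_eq_sinh_div_cosh, div_le_div_iff₀ (cosh_pos x) (cosh_pos y)]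
  have h := sinh_nonneg_iff.mpr (sub_nonneg.mpr hxy)
  rw [sinh_sub] at h
  linarith

lemma tanh_half (x : ℝ) : tanh (x / 2) = sinh x / (cosh x + 1) := by
  obtain ⟨y, rfl⟩ : ∃ y, x = 2 * y := ⟨x / 2, by ring⟩
  have hc : 0 < cosh y := cosh_pos y
  rw [mul_div_cancel_left₀ y two_ne_zero, tanh_eq_sinh_div_cosh, sinh_two_mul, cosh_two_mul,
    div_eq_div_iff hc.ne' (by positivity)]
  linear_combination (-sinh y) * cosh_sq y

lemma tanh_half_arcosh {c : ℝ} (hc : 1 ≤ c) :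
    tanh (Real.arcosh c / 2) = √((c - 1) / (c + 1)) := by
  have hc1 : 0 < c + 1 := by linarith
  rw [tanh_half, sinh_arcosh hc, cosh_arcosh hc]
  conv_lhs => rw [← sqrt_sq hc1.le, ← sqrt_div' _ (sq_nonneg _)]
  congr 1
  rw [div_eq_div_iff (by positivity) hc1.ne']
  ring

lemma arsinh_eq_arcosh_sqrt {s : ℝ} (hs : 0 ≤ s) : arsinh s = Real.arcosh √(1 + s ^ 2) := by
  rw [← cosh_arsinh, arcosh_cosh (arsinh_nonneg_iff.mpr hs)]

section Ball

variable {E : Type*} [NormedAddCommGroup E] {a b : E}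

lemma one_sub_norm_sq_pos (ha : ‖a‖ < 1) : 0 < 1 - ‖a‖ ^ 2 :=
  sub_pos.mpr (pow_lt_one₀ (norm_nonneg a) ha two_ne_zero)

lemma one_sub_sq_mul_one_sub_sq_pos (ha : ‖a‖ < 1) (hb : ‖b‖ < 1) :
    0 < (1 - ‖a‖ ^ 2) * (1 - ‖b‖ ^ 2) :=
  mul_pos (one_sub_norm_sq_pos ha) (one_sub_norm_sq_pos hb)

noncomputable def sinhHalfHyp (a b : E) : ℝ :=
  ‖a - b‖ / √((1 - ‖a‖ ^ 2) * (1 - ‖b‖ ^ 2))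

lemma sinhHalfHyp_nonneg (a b : E) : 0 ≤ sinhHalfHyp a b := by
  unfold sinhHalfHyp; positivity

variable [InnerProductSpace ℝ E]

noncomputable def coshHalfHilbert (a b : E) : ℝ :=
  (1 - ⟪a, b⟫) / √((1 - ‖a‖ ^ 2) * (1 - ‖b‖ ^ 2))

lemma sqrt_mul_one_sub_sq_le_one_sub_inner (ha : ‖a‖ ≤ 1) (hb : ‖b‖ ≤ 1) :
    √((1 - ‖a‖ ^ 2) * (1 - ‖b‖ ^ 2)) ≤ 1 - ⟪a, b⟫ := by
  have hab : ‖a‖ * ‖b‖ ≤ 1 := mul_le_one₀ ha (norm_nonneg b) hb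
  calc √((1 - ‖a‖ ^ 2) * (1 - ‖b‖ ^ 2))
      ≤ √((1 - ‖a‖ * ‖b‖) ^ 2) := sqrt_le_sqrt (by nlinarith [sq_nonneg (‖a‖ - ‖b‖)])
    _ = 1 - ‖a‖ * ‖b‖ := sqrt_sq (by linarith)
    _ ≤ 1 - ⟪a, b⟫ := by linarith [real_inner_le_norm a b]

lemma one_le_coshHalfHilbert (ha : ‖a‖ < 1) (hb : ‖b‖ < 1) : 1 ≤ coshHalfHilbert a b :=
  (one_le_div (sqrt_pos.mpr (one_sub_sq_mul_one_sub_sq_pos ha hb))).mpr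
    (sqrt_mul_one_sub_sq_le_one_sub_inner ha.le hb.le)

lemma coshHalfHilbert_sq (ha : ‖a‖ < 1) (hb : ‖b‖ < 1) :
    coshHalfHilbert a b ^ 2 = 1 + sinhHalfHyp a b ^ 2 +
      (⟪a, b⟫ ^ 2 - ‖a‖ ^ 2 * ‖b‖ ^ 2) / ((1 - ‖a‖ ^ 2) * (1 - ‖b‖ ^ 2)) := by
  have hD := one_sub_sq_mul_one_sub_sq_pos ha hb
  rw [coshHalfHilbert, sinhHalfHyp, div_pow, div_pow, sq_sqrt hD.le, norm_sub_sq_real,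
    one_add_div hD.ne', ← add_div, div_left_inj' hD.ne']
  ring

lemma coshHalfHilbert_le (ha : ‖a‖ < 1) (hb : ‖b‖ < 1) :
    coshHalfHilbert a b ≤ √(1 + sinhHalfHyp a b ^ 2) := by
  have hcs : ⟪a, b⟫ ^ 2 ≤ ‖a‖ ^ 2 * ‖b‖ ^ 2 := by
    rw [← mul_pow, sq_le_sq]
    exact (abs_real_inner_le_norm a b).trans (le_abs_self _)
  apply le_sqrt_of_sq_le
  rw [coshHalfHilbert_sq ha hb]
  have := div_nonpos_of_nonpos_of_nonneg (sub_nonpos.mpr hcs)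
    (one_sub_sq_mul_one_sub_sq_pos ha hb).le
  linarith

lemma coshHalfHilbert_neg_left (hb : ‖b‖ < 1) :
    coshHalfHilbert (-b) b = √(1 + sinhHalfHyp (-b) b ^ 2) := by
  have hb' : ‖-b‖ < 1 := by rwa [norm_neg]
  rw [← sqrt_sq (one_le_coshHalfHilbert hb' hb |>.trans' zero_le_one), coshHalfHilbert_sq hb' hb]
  simp only [inner_neg_left, real_inner_self_eq_norm_sq, norm_neg]
  congr 1
  ring

lemma norm_sub_div_sqrt_le (ha : ‖a‖ < 1) (hb : ‖b‖ < 1) :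
    ‖a - b‖ / √(4 - ‖a + b‖ ^ 2) ≤
      √((coshHalfHilbert a b - 1) / (coshHalfHilbert a b + 1)) := by
  have hP := one_sub_sq_mul_one_sub_sq_pos ha hb
  set D := √((1 - ‖a‖ ^ 2) * (1 - ‖b‖ ^ 2)) with hD_def
  have hD : 0 < D := sqrt_pos.mpr hP
  have hDsq : D ^ 2 = (1 - ‖a‖ ^ 2) * (1 - ‖b‖ ^ 2) := sq_sqrt hP.le
  have hDx : D ≤ 1 - ⟪a, b⟫ := sqrt_mul_one_sub_sq_le_one_sub_inner ha.le hb.le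
  have hAM : 2 * D ≤ (1 - ‖a‖ ^ 2) + (1 - ‖b‖ ^ 2) := by
    nlinarith [sq_nonneg ((1 - ‖a‖ ^ 2) - (1 - ‖b‖ ^ 2)), one_sub_norm_sq_pos ha,
      one_sub_norm_sq_pos hb]
  have hsum : ‖a + b‖ ^ 2 < 4 := by
    have := (norm_add_le a b).trans_lt (add_lt_add ha hb)
    nlinarith [norm_nonneg (a + b)]
  have hratio : (coshHalfHilbert a b - 1) / (coshHalfHilbert a b + 1)
      = (1 - ⟪a, b⟫ - D) / (1 - ⟪a, b⟫ + D) := by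
    rw [coshHalfHilbert, ← hD_def, div_sub_one hD.ne', div_add_one hD.ne',
      div_div_div_cancel_right₀ hD.ne']
  rw [← sqrt_sq (norm_nonneg (a - b)), ← sqrt_div' _ (by linarith)]
  apply sqrt_le_sqrt
  rw [hratio, div_le_div_iff₀ (by linarith) (by linarith), norm_sub_sq_real, norm_add_sq_real]
  nlinarith [mul_nonneg (hD.le.trans hDx) (sub_nonneg.mpr hAM)]

lemma coshHalfHilbert_neg_left_eq (hb : ‖b‖ < 1) :
    coshHalfHilbert (-b) b = (1 + ‖b‖ ^ 2) / (1 - ‖b‖ ^ 2) := by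
  rw [coshHalfHilbert, inner_neg_left, real_inner_self_eq_norm_sq, norm_neg,
    sqrt_mul_self (one_sub_norm_sq_pos hb).le,
    sub_neg_eq_add]

lemma coshHalfHilbert_neg_left_sub_one_div (hb : ‖b‖ < 1) :
    (coshHalfHilbert (-b) b - 1) / (coshHalfHilbert (-b) b + 1) = ‖b‖ ^ 2 := by
  have hB := one_sub_norm_sq_pos hb
  rw [coshHalfHilbert_neg_left_eq hb]
  field_simp
  ring

lemma norm_neg_sub_div_sqrt (b : E) : ‖-b - b‖ / √(4 - ‖-b + b‖ ^ 2) = ‖b‖ := by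
  rw [neg_add_cancel, norm_zero, ← neg_add', norm_neg, ← two_smul ℝ b, norm_smul]
  norm_num

end Ball

-- The `arcosh` above unfolds to Mathlib's `Real.arcosh`.
lemma hilbertDist_eq {n : ℕ} (a b : EuclideanSpace ℝ (Fin n)) :
    hilbertDist a b = 2 * Real.arcosh (coshHalfHilbert a b) :=
  rfl

lemma hypDist_eq {n : ℕ} (a b : EuclideanSpace ℝ (Fin n)) :
    hypDist a b = 2 * arsinh (sinhHalfHyp a b) :=
  rfl

/-- Corollary 3.7: `tanh(ρ(a,b)/4) ≥ tanh(h(a,b)/4) ≥ ‖a−b‖/√(4−‖a+b‖²)` for `a, b` in the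
unit ball, with equality throughout when `a = −b`. -/
theorem stmt_9 (n : ℕ) (a b : EuclideanSpace ℝ (Fin n)) (ha : ‖a‖ < 1) (hb : ‖b‖ < 1) :
    (Real.tanh (hilbertDist a b / 4) ≤ Real.tanh (hypDist a b / 4) ∧
      ‖a - b‖ / Real.sqrt (4 - ‖a + b‖^2) ≤ Real.tanh (hilbertDist a b / 4)) ∧
    (a = -b →
      Real.tanh (hypDist a b / 4) = Real.tanh (hilbertDist a b / 4) ∧
        Real.tanh (hilbertDist a b / 4) = ‖a - b‖ / Real.sqrt (4 - ‖a + b‖^2)) := by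
  have hc := one_le_coshHalfHilbert ha hb
  have hHilb : hilbertDist a b / 4 = Real.arcosh (coshHalfHilbert a b) / 2 := by
    rw [hilbertDist_eq]; ring
  have hHyp : hypDist a b / 4 = Real.arcosh √(1 + sinhHalfHyp a b ^ 2) / 2 := by
    rw [hypDist_eq, arsinh_eq_arcosh_sqrt (sinhHalfHyp_nonneg a b)]; ring
  refine ⟨⟨?_, ?_⟩, ?_⟩
  · rw [hHilb, hHyp]
    apply tanh_monotone
    gcongr
    exact (arcosh_le_arcosh (by linarith) (by positivity)).mpr (coshHalfHilbert_le ha hb)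
  · rw [hHilb, tanh_half_arcosh hc]
    exact norm_sub_div_sqrt_le ha hb
  · rintro rfl
    refine ⟨by rw [hHilb, hHyp, coshHalfHilbert_neg_left hb], ?_⟩
    rw [hHilb, tanh_half_arcosh hc, coshHalfHilbert_neg_left_sub_one_div hb,
      sqrt_sq (norm_nonneg b), norm_neg_sub_div_sqrt]
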